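/- arXiv:2302.02421 — 2 statements merged into one kernel-verified Lean document; each statement's English description precedes it below -/
import Mathlib

section
/- Let G be a compact connected Lie group of rank ℓ with Lie algebra g, let (ν_big, g*_{s-reg}) be a strong Gelfand–Cetlin datum on g*, and let M be a connected symplectic manifold endowed with an effective Hamiltonian G-action and proper moment map μ: M → g*. Then the restriction of μ_big = ν_big ∘ μ to μ^{-1}(g*_{μ,s-reg}), viewed as a map μ^{-1}(g*_{μ,s-reg}) → U_big, is a proper smooth submersion. -/
/-!
Common abstract framework for Crooks–Weitsman, "A non-abelian Duistermaat–Heckman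
theorem" (arXiv:2302.02421).

`G` is a compact connected Lie group of rank `ℓ`.  The normed space `E` plays the
role of the dual `g*` of the Lie algebra `g` of `G`, and `E →L[ℝ] ℝ` plays the role
of `g ≅ g**`.  We write `u = (dim g - ℓ)/2`, so that `b = ℓ + u = (dim g + ℓ)/2`.
Notions with no Mathlib formalization (the exponential lattice `Λ_ξ`, symplectic
forms, Liouville measures, symplectic volumes of coadjoint orbits and of symplectic
quotients, Hamiltonian/moment-map conditions for the torus actions of a
Gelfand–Cetlin datum) are carried as abstract data, documented in the comments.
-/

open MeasureTheory Set Function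
open scoped ENNReal NNReal Manifold

noncomputable section

/-- `ℝ_big = ℝ^ℓ × ℝ^u ≅ ℝ^b` where `b = ℓ + u = (dim g + rank G)/2`.  Its `volume`
is the Lebesgue measure `λ_big`, dual to the Haar measure on `𝕋_big = U(1)^b`
normalized to total volume `1`. -/
abbrev RBig (ℓ u : ℕ) : Type := (Fin ℓ → ℝ) × (Fin u → ℝ)

/-- The Lie-theoretic setting: a compact connected Lie group `G` of rank `ℓ`, with
`E = g*`, the coadjoint `G`-action `coadj` on `g*`, the infinitesimal coadjoint
action `ad` of `g = E →L[ℝ] ℝ` on `g*`, the lattices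
`Λ_ξ = (1/2π) ker (exp|_{g_ξ}) ⊂ g_ξ ⊂ g` (abstract data, since the Lie-group
exponential is not formalized), and the symplectic (Liouville) volumes `volOrbit ξ`
of the coadjoint orbits `O_ξ` for their Kirillov–Kostant–Souriau symplectic forms
(abstract data). -/
structure CoadjointSetting (G : Type*) [Group G] [TopologicalSpace G]
    [IsTopologicalGroup G] [CompactSpace G] [ConnectedSpace G]
    (E : Type*) [NormedAddCommGroup E] [NormedSpace ℝ E] [FiniteDimensional ℝ E]
    (ℓ u : ℕ) : Type _ where
  /-- the coadjoint action of `G` on `g*` -/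
  coadj : G →* (E ≃L[ℝ] E)
  coadj_continuous : Continuous fun p : G × E => coadj p.1 p.2
  /-- the infinitesimal coadjoint action of `g ≅ g** = (E →L[ℝ] ℝ)` on `g* = E` -/
  ad : (E →L[ℝ] ℝ) →ₗ[ℝ] E →ₗ[ℝ] E
  /-- `dim g = ℓ + 2u`, i.e. `u = (dim g - ℓ)/2` -/
  dim_eq : Module.finrank ℝ E = ℓ + 2 * u
  /-- `Λ_ξ = (1/2π) ker (exp|_{g_ξ})` (abstract data) -/
  lattice : E → Submodule ℤ (E →L[ℝ] ℝ)
  /-- `Λ_ξ` is contained in the centralizer `g_ξ = {x : g | ad*_x ξ = 0}` -/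
  lattice_le : ∀ (ξ : E), ∀ x ∈ lattice ξ, ad x ξ = 0
  /-- the symplectic volume of the coadjoint orbit `O_ξ` (abstract data) -/
  volOrbit : E → ℝ≥0
  volOrbit_invariant : ∀ (g : G) (ξ : E), volOrbit (coadj g ξ) = volOrbit ξ

namespace CoadjointSetting

variable {G : Type*} [Group G] [TopologicalSpace G] [IsTopologicalGroup G]
  [CompactSpace G] [ConnectedSpace G]
  {E : Type*} [NormedAddCommGroup E] [NormedSpace ℝ E] [FiniteDimensional ℝ E]
  {ℓ u : ℕ}

/-- the centralizer `g_ξ ⊂ g` of `ξ ∈ g*` under the infinitesimal coadjoint action -/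
def centralizer (S : CoadjointSetting G E ℓ u) (ξ : E) : Submodule ℝ (E →L[ℝ] ℝ) :=
  LinearMap.ker (S.ad.flip ξ)

/-- the set `g*_reg` of regular elements: those `ξ ∈ g*` with `dim g_ξ = ℓ = rank G` -/
def reg (S : CoadjointSetting G E ℓ u) : Set E :=
  {ξ | Module.finrank ℝ (S.centralizer ξ) = ℓ}

/-- the coadjoint orbit `O_ξ ⊂ g*` of `G` through `ξ` -/
def orbit (S : CoadjointSetting G E ℓ u) (ξ : E) : Set E :=
  Set.range fun g : G => S.coadj g ξ

end CoadjointSetting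

/-- A *Gelfand–Cetlin datum* `(ν_big, g*_{s-reg})` on `g*`
(Crooks–Weitsman, Definition 1): a continuous map
`ν_big = (ν_small, ν_int) : g* → ℝ_big = ℝ^ℓ × ℝ^u` and an open dense subset
`g*_{s-reg} ⊆ g*_reg` satisfying conditions (i)–(v).  The conditions that
`ν_big|_{g*_{s-reg}}` be a *moment map* for a Hamiltonian `𝕋_big`-action (in (iii)
and (v)) and the `𝕋_int`-principal-bundle structure in (iv) involve unformalized
symplectic/Poisson geometry; of (iv) we record the consequence that
`ν_big|_{g*_{s-reg}}` is an open map onto its image. -/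
structure GCDatum {G : Type*} [Group G] [TopologicalSpace G]
    [IsTopologicalGroup G] [CompactSpace G] [ConnectedSpace G]
    {E : Type*} [NormedAddCommGroup E] [NormedSpace ℝ E] [FiniteDimensional ℝ E]
    {ℓ u : ℕ} (S : CoadjointSetting G E ℓ u) : Type _ where
  /-- `ν_small = (ν_1, …, ν_ℓ)` -/
  nuSmall : E → Fin ℓ → ℝ
  /-- `ν_int = (ν_{ℓ+1}, …, ν_b)` -/
  nuInt : E → Fin u → ℝ
  /-- the set `g*_{s-reg}` of strongly regular elements -/
  sreg : Set E
  /-- `ν_big` is continuous -/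
  continuous_nuBig : Continuous fun ξ : E => ((nuSmall ξ, nuInt ξ) : RBig ℓ u)
  sreg_open : IsOpen sreg
  sreg_dense : Dense sreg
  sreg_subset_reg : sreg ⊆ S.reg
  /-- (i): `ν_1, …, ν_ℓ` are `G`-invariant -/
  invariant : ∀ (g : G) (ξ : E), nuSmall (S.coadj g ξ) = nuSmall ξ
  /-- (i): `ν_1, …, ν_ℓ` are smooth on `g*_reg` -/
  smooth_small : ∀ i, ContDiffOn ℝ (⊤ : ℕ∞) (fun ξ => nuSmall ξ i) S.reg
  /-- (ii): `{d_ξν_1, …, d_ξν_ℓ}` is a `ℤ`-basis of `Λ_ξ` for all `ξ ∈ g*_reg` -/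
  lattice_basis : ∀ ξ ∈ S.reg, ∃ bb : Module.Basis (Fin ℓ) ℤ (S.lattice ξ),
    ∀ i, (bb i : E →L[ℝ] ℝ) = fderivWithin ℝ (fun η => nuSmall η i) S.reg ξ
  /-- (iii): `ν_big|_{g*_{s-reg}}` is smooth (and is a moment map for a Hamiltonian
  `𝕋_big`-action on the Poisson manifold `g*_{s-reg}`; the latter is unformalized) -/
  smooth_sreg : ContDiffOn ℝ (⊤ : ℕ∞) (fun ξ : E => ((nuSmall ξ, nuInt ξ) : RBig ℓ u)) sreg
  /-- (iii): `ν_big|_{g*_{s-reg}}` is a submersion -/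
  submersion : ∀ ξ ∈ sreg,
    Function.Surjective (fderiv ℝ (fun ξ : E => ((nuSmall ξ, nuInt ξ) : RBig ℓ u)) ξ)
  /-- (iv): `ν_big : g*_{s-reg} → ν_big(g*_{s-reg})` is a principal `𝕋_int`-bundle;
  we record that it is an open map onto its image -/
  bundle_open : ∀ V : Set E, IsOpen V → ∃ W : Set (RBig ℓ u), IsOpen W ∧
    (fun ξ : E => ((nuSmall ξ, nuInt ξ) : RBig ℓ u)) '' (V ∩ sreg)
      = W ∩ (fun ξ : E => ((nuSmall ξ, nuInt ξ) : RBig ℓ u)) '' sreg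

namespace GCDatum

variable {G : Type*} [Group G] [TopologicalSpace G] [IsTopologicalGroup G]
  [CompactSpace G] [ConnectedSpace G]
  {E : Type*} [NormedAddCommGroup E] [NormedSpace ℝ E] [FiniteDimensional ℝ E]
  {ℓ u : ℕ} {S : CoadjointSetting G E ℓ u}

/-- `ν_big = (ν_small, ν_int) : g* → ℝ_big` -/
def nuBig (D : GCDatum S) : E → RBig ℓ u := fun ξ => (D.nuSmall ξ, D.nuInt ξ)

end GCDatum

/-- A *strong Gelfand–Cetlin datum* (Definition 2 of the paper): a Gelfand–Cetlin
datum satisfying the additional conditions (vi)–(ix). -/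
structure StrongGCDatum {G : Type*} [Group G] [TopologicalSpace G]
    [IsTopologicalGroup G] [CompactSpace G] [ConnectedSpace G]
    {E : Type*} [NormedAddCommGroup E] [NormedSpace ℝ E] [FiniteDimensional ℝ E]
    {ℓ u : ℕ} (S : CoadjointSetting G E ℓ u) extends GCDatum S : Type _ where
  /-- (vi): if `ν_small ξ = ν_small η` then `O_ξ = O_η` -/
  small_eq_orbit : ∀ ξ η : E, nuSmall ξ = nuSmall η → S.orbit ξ = S.orbit η
  /-- (vii): `ν_big` is proper -/
  proper_nuBig : IsProperMap fun ξ : E => ((nuSmall ξ, nuInt ξ) : RBig ℓ u)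
  /-- (viii): `g*_{s-reg}` is a union of fibers of `ν_big` -/
  sreg_fiber_union : ∀ ξ η : E,
    ((nuSmall ξ, nuInt ξ) : RBig ℓ u) = (nuSmall η, nuInt η) → ξ ∈ sreg → η ∈ sreg
  /-- (ix): `O_ξ ∩ g*_{s-reg}` is dense in `O_ξ` for `ξ ∈ g*_{s-reg}` -/
  orbit_sreg_dense : ∀ ξ ∈ sreg, S.orbit ξ ⊆ closure (S.orbit ξ ∩ sreg)

/-- A connected symplectic manifold `M` with an effective Hamiltonian `G`-action and
a proper moment map `μ : M → g*`.  The symplectic form `ω` itself is not formalized: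
we carry as abstract data the Liouville measure `λ_M` of `ωⁿ/n!` and, for each
`ξ ∈ g*`, the symplectic volume `volQuot ξ` of the symplectic quotient
`M ⫽_ξ G = μ⁻¹(O_ξ)/G` (a compact symplectic orbifold when `ξ` is a regular value
of `μ`). -/
structure HamiltonianSpace {G : Type*} [Group G] [TopologicalSpace G]
    [IsTopologicalGroup G] [CompactSpace G] [ConnectedSpace G]
    {E : Type*} [NormedAddCommGroup E] [NormedSpace ℝ E] [FiniteDimensional ℝ E]
    {ℓ u : ℕ} (S : CoadjointSetting G E ℓ u)
    (M : Type*) [TopologicalSpace M] [ConnectedSpace M] [MeasurableSpace M]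
    [BorelSpace M]
    (H : Type*) [NormedAddCommGroup H] [NormedSpace ℝ H]
    [ChartedSpace H M] [IsManifold 𝓘(ℝ, H) ((⊤ : ℕ∞) : WithTop ℕ∞) M] : Type _ where
  /-- the moment map `μ : M → g*` -/
  mu : M → E
  smooth_mu : ContMDiff 𝓘(ℝ, H) 𝓘(ℝ, E) (⊤ : ℕ∞) mu
  proper_mu : IsProperMap mu
  /-- the `G`-action on `M` -/
  act : G →* Equiv.Perm M
  act_continuous : Continuous fun p : G × M => act p.1 p.2
  act_smooth : ∀ g : G, ContMDiff 𝓘(ℝ, H) 𝓘(ℝ, H) (⊤ : ℕ∞) ⇑(act g)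
  /-- the action is effective -/
  effective : ∀ g : G, (∀ m : M, act g m = m) → g = 1
  /-- `μ` is `G`-equivariant (part of the Hamiltonian condition) -/
  equivariant : ∀ (g : G) (m : M), mu (act g m) = S.coadj g (mu m)
  /-- the Liouville measure `λ_M` of `ωⁿ/n!` (abstract data) -/
  lambdaM : Measure M
  /-- the `G`-action is symplectic, hence preserves `λ_M` -/
  lambdaM_invariant : ∀ g : G, Measure.map (⇑(act g)) lambdaM = lambdaM
  /-- the symplectic volume of the symplectic quotient `M ⫽_ξ G` (abstract data) -/
  volQuot : E → ℝ≥0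

namespace HamiltonianSpace

variable {G : Type*} [Group G] [TopologicalSpace G] [IsTopologicalGroup G]
  [CompactSpace G] [ConnectedSpace G]
  {E : Type*} [NormedAddCommGroup E] [NormedSpace ℝ E] [FiniteDimensional ℝ E]
  {ℓ u : ℕ} {S : CoadjointSetting G E ℓ u}
  {M : Type*} [TopologicalSpace M] [ConnectedSpace M] [MeasurableSpace M]
  [BorelSpace M]
  {H : Type*} [NormedAddCommGroup H] [NormedSpace ℝ H]
  [ChartedSpace H M] [IsManifold 𝓘(ℝ, H) ((⊤ : ℕ∞) : WithTop ℕ∞) M]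

/-- `g*_{μ,s-reg}`: the set of regular values of `μ` lying in `g*_{s-reg}` -/
def muSreg (P : HamiltonianSpace S M H) (D : GCDatum S) : Set E :=
  {ξ | ξ ∈ D.sreg ∧ ∀ m : M, P.mu m = ξ →
    Function.Surjective (mfderiv 𝓘(ℝ, H) 𝓘(ℝ, E) P.mu m)}

/-- `U_big = ν_big(g*_{μ,s-reg}) ⊆ ℝ_big` -/
def Ubig (P : HamiltonianSpace S M H) (D : GCDatum S) : Set (RBig ℓ u) :=
  D.nuBig '' P.muSreg D

/-- `μ_big = ν_big ∘ μ : M → ℝ_big` -/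
def muBig (P : HamiltonianSpace S M H) (D : GCDatum S) : M → RBig ℓ u :=
  D.nuBig ∘ P.mu

/-- the non-abelian Duistermaat–Heckman measure `DH_big = (μ_big)_* λ_M` on `ℝ_big` -/
def DHbig (P : HamiltonianSpace S M H) (D : GCDatum S) : Measure (RBig ℓ u) :=
  Measure.map (P.muBig D) P.lambdaM

/-- the symplectic quotient `M ⫽_ξ G = μ⁻¹(O_ξ)/G`, as a topological space -/
def SymplecticQuotient (P : HamiltonianSpace S M H) (ξ : E) : Type _ :=
  Quot fun m m' : {m : M // P.mu m ∈ S.orbit ξ} => ∃ g : G, P.act g m.1 = m'.1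

instance (P : HamiltonianSpace S M H) (ξ : E) :
    TopologicalSpace (P.SymplecticQuotient ξ) :=
  inferInstanceAs (TopologicalSpace (Quot _))

end HamiltonianSpace

/-- The data attached to a choice of maximal torus `T ⊆ G` with Lie algebra `t`,
positive roots, and a `G`-invariant inner product on `g`: the subspace `t* ⊆ g*`,
the fundamental Weyl chamber `t*_+ ⊆ t*` (a fundamental domain for the coadjoint
action), the sweeping map `π : g* → t*_+` (whose fibers are the coadjoint orbits),
and the Lebesgue measure `λ_{t*}` on `t*` dual to the Haar measure on `T`
normalized to total volume `1` (the normalization being abstract data). -/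
structure ChamberSetting {G : Type*} [Group G] [TopologicalSpace G]
    [IsTopologicalGroup G] [CompactSpace G] [ConnectedSpace G]
    {E : Type*} [NormedAddCommGroup E] [NormedSpace ℝ E] [FiniteDimensional ℝ E]
    [MeasurableSpace E] [BorelSpace E]
    {ℓ u : ℕ} (S : CoadjointSetting G E ℓ u) : Type _ where
  /-- `t* ⊆ g*` -/
  tdual : Submodule ℝ E
  tdual_rank : Module.finrank ℝ tdual = ℓ
  /-- the fundamental Weyl chamber `t*_+` -/
  chamber : Set E
  chamber_subset : chamber ⊆ (tdual : Set E)
  chamber_closed : IsClosed chamber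
  /-- the sweeping map `π : g* → t*_+` -/
  sweep : E → E
  sweep_continuous : Continuous sweep
  /-- `O_ξ ∩ t*_+ = {π ξ}` -/
  sweep_spec : ∀ ξ : E, S.orbit ξ ∩ chamber = {sweep ξ}
  /-- the Lebesgue measure on `t* ⊆ g*` dual to the normalized Haar measure on `T` -/
  lambdaT : Measure E
  lambdaT_lebesgue : ∃ e : (Fin ℓ → ℝ) ≃L[ℝ] tdual,
    lambdaT = Measure.map (fun x => (e x : E)) volume

namespace ChamberSetting

variable {G : Type*} [Group G] [TopologicalSpace G] [IsTopologicalGroup G]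
  [CompactSpace G] [ConnectedSpace G]
  {E : Type*} [NormedAddCommGroup E] [NormedSpace ℝ E] [FiniteDimensional ℝ E]
  [MeasurableSpace E] [BorelSpace E]
  {ℓ u : ℕ} {S : CoadjointSetting G E ℓ u}
  {M : Type*} [TopologicalSpace M] [ConnectedSpace M] [MeasurableSpace M]
  [BorelSpace M]
  {H : Type*} [NormedAddCommGroup H] [NormedSpace ℝ H]
  [ChartedSpace H M] [IsManifold 𝓘(ℝ, H) ((⊤ : ℕ∞) : WithTop ℕ∞) M]

/-- `U_{t*_+} = π(g*_{μ,s-reg}) ⊆ t*_+` -/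
def Ut (C : ChamberSetting S) (P : HamiltonianSpace S M H) (D : GCDatum S) : Set E :=
  C.sweep '' P.muSreg D

/-- the `G`-invariant moment map `μ̄ = π ∘ μ : M → t*_+` -/
def muBar (C : ChamberSetting S) (P : HamiltonianSpace S M H) : M → E :=
  C.sweep ∘ P.mu

/-- the non-abelian Duistermaat–Heckman measure `DH_{t*_+} = μ̄_* λ_M` on `t*_+` -/
def DHt (C : ChamberSetting S) (P : HamiltonianSpace S M H) : Measure E :=
  Measure.map (C.muBar P) P.lambdaM

/-- the measure `λ_{t*_+}`: the restriction of `λ_{t*}` to `t*_+` -/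
def lambdaChamber (C : ChamberSetting S) : Measure E :=
  C.lambdaT.restrict C.chamber

end ChamberSetting

/-- The restriction of `μ_big = ν_big ∘ μ` to `μ⁻¹(g*_{μ,s-reg})`, viewed as a map
`μ⁻¹(g*_{μ,s-reg}) → U_big`, is a proper smooth submersion. -/
theorem muBig_restriction_proper_smooth_submersion
    {G : Type*} [Group G] [TopologicalSpace G] [IsTopologicalGroup G]
    [CompactSpace G] [ConnectedSpace G]
    {E : Type*} [NormedAddCommGroup E] [NormedSpace ℝ E] [FiniteDimensional ℝ E]
    {ℓ u : ℕ} {S : CoadjointSetting G E ℓ u}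
    {M : Type*} [TopologicalSpace M] [ConnectedSpace M] [MeasurableSpace M]
    [BorelSpace M]
    {H : Type*} [NormedAddCommGroup H] [NormedSpace ℝ H]
    [ChartedSpace H M] [IsManifold 𝓘(ℝ, H) ((⊤ : ℕ∞) : WithTop ℕ∞) M]
    (D : StrongGCDatum S) (P : HamiltonianSpace S M H) :
    ContMDiffOn 𝓘(ℝ, H) 𝓘(ℝ, RBig ℓ u) (⊤ : ℕ∞) (P.muBig D.toGCDatum)
        (P.mu ⁻¹' P.muSreg D.toGCDatum) ∧
    (∀ m : M, P.mu m ∈ P.muSreg D.toGCDatum →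
      Function.Surjective
        (mfderiv 𝓘(ℝ, H) 𝓘(ℝ, RBig ℓ u) (P.muBig D.toGCDatum) m)) ∧
    IsProperMap (fun m : (P.mu ⁻¹' P.muSreg D.toGCDatum) =>
      (⟨P.muBig D.toGCDatum m.1, P.mu m.1, m.2, rfl⟩ : P.Ubig D.toGCDatum)) := by
    classical
  set ν : E → RBig ℓ u := fun ξ => (D.nuSmall ξ, D.nuInt ξ) with hν
  have hμd : ∀ x : M, MDifferentiableAt 𝓘(ℝ, H) 𝓘(ℝ, E) P.mu x := fun x =>
    P.smooth_mu.mdifferentiableAt (by simp)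
  -- saturation of `g*_{μ,s-reg}` under fibers of `ν_big`
  have hsat : ∀ ξ η : E, ν ξ = ν η → ξ ∈ P.muSreg D.toGCDatum →
      η ∈ P.muSreg D.toGCDatum := by
    intro ξ η hνeq hξ
    have hηs : η ∈ D.sreg := D.sreg_fiber_union ξ η hνeq hξ.1
    have hsmall : D.nuSmall ξ = D.nuSmall η := congrArg Prod.fst hνeq
    have horb : S.orbit ξ = S.orbit η := D.small_eq_orbit ξ η hsmall
    have hηmem : η ∈ S.orbit ξ := by
      rw [horb]; exact ⟨1, by show (S.coadj 1) η = η; rw [map_one]; rfl⟩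
    obtain ⟨g, hg⟩ := hηmem
    refine ⟨hηs, fun m hm => ?_⟩
    set m' : M := P.act g⁻¹ m with hm'def
    have hmm : P.act g m' = m := by
      have h1 : (P.act g) ((P.act g⁻¹) m) = (P.act (g * g⁻¹)) m := by
        rw [map_mul]; rfl
      rw [hm'def, h1, mul_inv_cancel, map_one]; rfl
    have hμm' : P.mu m' = ξ := by
      have h1 : P.mu m' = S.coadj g⁻¹ (P.mu m) := P.equivariant g⁻¹ m
      have h2 : (S.coadj g⁻¹) ((S.coadj g) ξ) = (S.coadj (g⁻¹ * g)) ξ := by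
        rw [map_mul]; rfl
      rw [h1, hm, ← hg, h2, inv_mul_cancel, map_one]; rfl
    have hsurj' : Function.Surjective (mfderiv 𝓘(ℝ, H) 𝓘(ℝ, E) P.mu m') :=
      hξ.2 m' hμm'
    have hact : MDifferentiableAt 𝓘(ℝ, H) 𝓘(ℝ, H) (P.act g) m' :=
      (P.act_smooth g).mdifferentiableAt (by simp)
    have hcomp : mfderiv 𝓘(ℝ, H) 𝓘(ℝ, E) (P.mu ∘ (P.act g)) m'
        = (mfderiv 𝓘(ℝ, H) 𝓘(ℝ, E) P.mu (P.act g m')).comp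
          (mfderiv 𝓘(ℝ, H) 𝓘(ℝ, H) (P.act g) m') :=
      mfderiv_comp m' (hμd _) hact
    have hL : MDifferentiableAt 𝓘(ℝ, E) 𝓘(ℝ, E)
        (((S.coadj g : E ≃L[ℝ] E) : E →L[ℝ] E) : E → E) (P.mu m') :=
      (((S.coadj g : E ≃L[ℝ] E) : E →L[ℝ] E).contDiff (n := 1)).contMDiff.mdifferentiableAt one_ne_zero
    have hcomp2 : mfderiv 𝓘(ℝ, H) 𝓘(ℝ, E)
        ((((S.coadj g : E ≃L[ℝ] E) : E →L[ℝ] E) : E → E) ∘ P.mu) m'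
        = ((S.coadj g : E ≃L[ℝ] E) : E →L[ℝ] E).comp
          (mfderiv 𝓘(ℝ, H) 𝓘(ℝ, E) P.mu m') := by
      rw [mfderiv_comp m' hL (hμd m')]
      congr 1
      rw [mfderiv_eq_fderiv]
      exact ContinuousLinearMap.fderiv _
    have hfun : P.mu ∘ ⇑(P.act g)
        = (((S.coadj g : E ≃L[ℝ] E) : E →L[ℝ] E) : E → E) ∘ P.mu :=
      funext fun x => P.equivariant g x
    have hsur2 : Function.Surjective
        ((mfderiv 𝓘(ℝ, H) 𝓘(ℝ, E) P.mu (P.act g m')).comp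
          (mfderiv 𝓘(ℝ, H) 𝓘(ℝ, H) (P.act g) m')) := by
      rw [← hcomp, hfun, hcomp2]
      exact ((S.coadj g).surjective).comp hsurj'
    rw [hmm] at hsur2
    exact Function.Surjective.of_comp hsur2
  refine ⟨?_, ?_, ?_⟩
  · -- smoothness
    have hνsm : ContMDiffOn 𝓘(ℝ, E) 𝓘(ℝ, RBig ℓ u) (⊤ : ℕ∞) ν D.sreg :=
      (D.smooth_sreg.of_le (by simp)).contMDiffOn
    exact hνsm.comp P.smooth_mu.contMDiffOn (fun m hm => hm.1)
  · -- submersion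
    intro m hm
    have hξ : P.mu m ∈ D.sreg := hm.1
    have hνdiff : MDifferentiableAt 𝓘(ℝ, E) 𝓘(ℝ, RBig ℓ u) ν (P.mu m) :=
      ((D.smooth_sreg.contDiffAt (D.sreg_open.mem_nhds hξ)).differentiableAt (by simp)).mdifferentiableAt
    have hcomp : mfderiv 𝓘(ℝ, H) 𝓘(ℝ, RBig ℓ u) (ν ∘ P.mu) m
        = (mfderiv 𝓘(ℝ, E) 𝓘(ℝ, RBig ℓ u) ν (P.mu m)).comp
          (mfderiv 𝓘(ℝ, H) 𝓘(ℝ, E) P.mu m) :=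
      mfderiv_comp m hνdiff (hμd m)
    show Function.Surjective (mfderiv 𝓘(ℝ, H) 𝓘(ℝ, RBig ℓ u) (ν ∘ P.mu) m)
    rw [hcomp]
    have h1 : Function.Surjective (mfderiv 𝓘(ℝ, E) 𝓘(ℝ, RBig ℓ u) ν (P.mu m)) := by
      rw [mfderiv_eq_fderiv]
      exact D.submersion _ hξ
    exact h1.comp (hm.2 m rfl)
  · -- properness
    have hp : IsProperMap (ν ∘ P.mu) := D.proper_nuBig.comp P.proper_mu
    rw [isProperMap_iff_ultrafilter]
    constructor
    · exact Continuous.subtype_mk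
        ((D.continuous_nuBig.comp P.smooth_mu.continuous).comp continuous_subtype_val) _
    · intro 𝒰 y hy
      have hy2 : Filter.Tendsto ((ν ∘ P.mu) ∘ (Subtype.val :
          (P.mu ⁻¹' P.muSreg D.toGCDatum) → M)) 𝒰 (nhds (y : RBig ℓ u)) :=
        (continuous_subtype_val.tendsto _).comp hy
      have hy3 : Filter.Tendsto (ν ∘ P.mu) (𝒰.map Subtype.val) (nhds (y : RBig ℓ u)) := by
        rw [Ultrafilter.coe_map, Filter.tendsto_map'_iff]; exact hy2
      obtain ⟨m, hm1, hm2⟩ := (isProperMap_iff_ultrafilter.mp hp).2 hy3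
      have hmA : m ∈ P.mu ⁻¹' P.muSreg D.toGCDatum := by
        obtain ⟨ξ, hξ, hξeq⟩ := y.2
        exact hsat ξ (P.mu m) (by rw [← hm1] at hξeq; exact hξeq) hξ
      refine ⟨⟨m, hmA⟩, Subtype.ext hm1, ?_⟩
      have hmap : Filter.map (Subtype.val : (P.mu ⁻¹' P.muSreg D.toGCDatum) → M) ↑𝒰 ≤ nhds m := by
        rw [← Ultrafilter.coe_map]; exact hm2
      rw [nhds_subtype_eq_comap]
      exact Filter.map_le_iff_le_comap.mp hmap
end
end

section
/- Let G be a compact connected Lie group of rank ℓ with Lie algebra g, let (ν_big, g*_{s-reg}) be a strong Gelfand–Cetlin datum on g*, and let M be a connected symplectic manifold endowed with an effective Hamiltonian G-action and proper moment map μ: M → g*. Then g*_{μ,s-reg} is an open dense subset of π^{-1}(U_{t*+}), and consequently U_big = ν_big(g*_{μ,s-reg}) is open and dense in ν_big(π^{-1}(U_{t*+})). -/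
/-!
Common abstract framework for Crooks–Weitsman, "A non-abelian Duistermaat–Heckman
theorem" (arXiv:2302.02421).

`G` is a compact connected Lie group of rank `ℓ`.  The normed space `E` plays the
role of the dual `g*` of the Lie algebra `g` of `G`, and `E →L[ℝ] ℝ` plays the role
of `g ≅ g**`.  We write `u = (dim g - ℓ)/2`, so that `b = ℓ + u = (dim g + ℓ)/2`.
Notions with no Mathlib formalization (the exponential lattice `Λ_ξ`, symplectic
forms, Liouville measures, symplectic volumes of coadjoint orbits and of symplectic
quotients, Hamiltonian/moment-map conditions for the torus actions of a
Gelfand–Cetlin datum) are carried as abstract data, documented in the comments.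
-/

open MeasureTheory Set Function
open scoped ENNReal NNReal Manifold

noncomputable section

section AuxLemmas

/-- The set of surjective continuous linear maps onto a finite-dimensional space is open. -/
theorem CW_isOpen_setOf_surj_clm {H E : Type*} [NormedAddCommGroup H] [NormedSpace ℝ H]
    [NormedAddCommGroup E] [NormedSpace ℝ E] [FiniteDimensional ℝ E] :
    IsOpen {T : H →L[ℝ] E | Surjective T} := by
  classical
  rw [isOpen_iff_mem_nhds]
  intro T hT
  set n := Module.finrank ℝ E with hn
  let e : Module.Basis (Fin n) ℝ E := Module.finBasis ℝ E
  choose u hu using fun i => hT (e i)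
  set Φ : (H →L[ℝ] E) → Matrix (Fin n) (Fin n) ℝ :=
    fun S => Matrix.of fun i j => e.repr (S (u j)) i with hΦ
  have hΦcont : Continuous Φ := by
    apply continuous_matrix
    intro i j
    have h1 : Continuous fun S : H →L[ℝ] E => S (u j) :=
      (ContinuousLinearMap.apply ℝ E (u j)).continuous
    have h2 : Continuous fun y : E => (e.repr y) i :=
      LinearMap.continuous_of_finiteDimensional
        ((Finsupp.lapply i).comp (e.repr : E →ₗ[ℝ] (Fin n →₀ ℝ)))
    exact h2.comp h1
  have hdet : Continuous fun S => (Φ S).det := hΦcont.matrix_det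
  have hsub : {S : H →L[ℝ] E | (Φ S).det ≠ 0} ⊆ {S | Surjective S} := by
    intro S hS
    set v := Pi.basisFun ℝ (Fin n)
    set L : (Fin n → ℝ) →ₗ[ℝ] E := v.constr ℝ (fun j => S (u j)) with hL
    have htm : LinearMap.toMatrix v e L = Φ S := by
      ext i j
      rw [LinearMap.toMatrix_apply, hL, Module.Basis.constr_basis]; rfl
    have hU : IsUnit (LinearMap.toMatrix v e L).det := by
      rw [htm]; exact isUnit_iff_ne_zero.mpr hS
    have hLsurj : Surjective L := by
      have := (LinearEquiv.ofIsUnitDet hU).surjective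
      rwa [show ⇑(LinearEquiv.ofIsUnitDet hU) = ⇑L from rfl] at this
    intro y
    obtain ⟨c, hc⟩ := hLsurj y
    refine ⟨(v.constr (M' := H) ℝ u) c, ?_⟩
    have hcomp : (S : H →ₗ[ℝ] E) ∘ₗ (v.constr (M' := H) ℝ u) = L := by
      apply v.ext; intro j
      simp [hL, Module.Basis.constr_basis]
    calc S ((v.constr (M' := H) ℝ u) c)
        = ((S : H →ₗ[ℝ] E) ∘ₗ (v.constr (M' := H) ℝ u)) c := rfl
      _ = L c := by rw [hcomp]
      _ = y := hc
  refine Filter.mem_of_superset ?_ hsub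
  have hopen : IsOpen {S : H →L[ℝ] E | (Φ S).det ≠ 0} :=
    isOpen_compl_iff.mpr (isClosed_singleton.preimage hdet)
  refine hopen.mem_nhds ?_
  have hTone : Φ T = 1 := by
    ext i j
    simp only [hΦ, Matrix.of_apply, hu, Matrix.one_apply]
    rw [Module.Basis.repr_self_apply]
    simp [eq_comm]
  simp [Set.mem_setOf_eq, hTone]

/-- The set of points where the differential of a smooth map to a finite-dimensional
vector space is surjective is open. -/
theorem CW_isOpen_setOf_mfderiv_surjective
    {E : Type*} [NormedAddCommGroup E] [NormedSpace ℝ E] [FiniteDimensional ℝ E]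
    {M : Type*} [TopologicalSpace M]
    {H : Type*} [NormedAddCommGroup H] [NormedSpace ℝ H]
    [ChartedSpace H M] [IsManifold 𝓘(ℝ, H) ((⊤ : ℕ∞) : WithTop ℕ∞) M]
    {f : M → E} (hf : ContMDiff 𝓘(ℝ, H) 𝓘(ℝ, E) (⊤ : ℕ∞) f) :
    IsOpen {m : M | Surjective (mfderiv 𝓘(ℝ, H) 𝓘(ℝ, E) f m)} := by
  rw [isOpen_iff_mem_nhds]
  intro m₀ hm₀
  set c := chartAt H m₀ with hc
  set g : H → E := f ∘ c.symm with hg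
  have hgsm : ContMDiffOn 𝓘(ℝ, H) 𝓘(ℝ, E) ((⊤ : ℕ∞) : WithTop ℕ∞) g c.target :=
    hf.comp_contMDiffOn contMDiffOn_chart_symm
  have hgd : ContDiffOn ℝ ((⊤ : ℕ∞) : WithTop ℕ∞) g c.target := hgsm.contDiffOn
  have hopen : IsOpen c.target := c.open_target
  have hfd : ContinuousOn (fderiv ℝ g) c.target :=
    hgd.continuousOn_fderiv_of_isOpen hopen (by exact_mod_cast le_top)
  have key : ∀ m ∈ c.source, (Surjective (mfderiv 𝓘(ℝ, H) 𝓘(ℝ, E) f m) ↔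
      Surjective (fderiv ℝ g (c m))) := by
    intro m hm
    have hx : c m ∈ c.target := c.map_source hm
    have hgdiff : DifferentiableAt ℝ g (c m) :=
      (hgd.differentiableOn (by simp)).differentiableAt (hopen.mem_nhds hx)
    have hgm : MDifferentiableAt 𝓘(ℝ, H) 𝓘(ℝ, E) g (c m) := hgdiff.mdifferentiableAt
    have hcm : MDifferentiableAt 𝓘(ℝ, H) 𝓘(ℝ, H) c m :=
      mdifferentiableAt_atlas (chart_mem_atlas H m₀) hm
    have hcsm : MDifferentiableAt 𝓘(ℝ, H) 𝓘(ℝ, H) c.symm (c m) :=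
      mdifferentiableAt_atlas_symm (chart_mem_atlas H m₀) hx
    have hfm : MDifferentiableAt 𝓘(ℝ, H) 𝓘(ℝ, E) f m := (hf m).mdifferentiableAt (by simp)
    have hfeq : f =ᶠ[nhds m] g ∘ c := by
      filter_upwards [c.open_source.mem_nhds hm] with m' hm'
      simp [hg, c.left_inv hm']
    have h1 : mfderiv 𝓘(ℝ, H) 𝓘(ℝ, E) f m
        = (mfderiv 𝓘(ℝ, H) 𝓘(ℝ, E) g (c m)).comp (mfderiv 𝓘(ℝ, H) 𝓘(ℝ, H) c m) := by
      rw [hfeq.mfderiv_eq (I := 𝓘(ℝ, H)) (I' := 𝓘(ℝ, E)), mfderiv_comp m hgm hcm]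
    have h2 : mfderiv 𝓘(ℝ, H) 𝓘(ℝ, E) g (c m)
        = (mfderiv 𝓘(ℝ, H) 𝓘(ℝ, E) f m).comp (mfderiv 𝓘(ℝ, H) 𝓘(ℝ, H) c.symm (c m)) := by
      have := mfderiv_comp (I' := 𝓘(ℝ, H)) (I'' := 𝓘(ℝ, E)) (c m) (f := c.symm) (g := f)
        ?_ hcsm
      · rw [hg, this, c.left_inv hm]
      · rw [c.left_inv hm]; exact hfm
    have h3 : mfderiv 𝓘(ℝ, H) 𝓘(ℝ, E) g (c m) = fderiv ℝ g (c m) := mfderiv_eq_fderiv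
    constructor
    · intro hs
      rw [← h3]
      have hco : Surjective (⇑(mfderiv 𝓘(ℝ, H) 𝓘(ℝ, E) g (c m))
          ∘ ⇑(mfderiv 𝓘(ℝ, H) 𝓘(ℝ, H) c m)) := by
        have he : ⇑(mfderiv 𝓘(ℝ, H) 𝓘(ℝ, E) g (c m)) ∘ ⇑(mfderiv 𝓘(ℝ, H) 𝓘(ℝ, H) c m)
            = ⇑((mfderiv 𝓘(ℝ, H) 𝓘(ℝ, E) g (c m)).comp (mfderiv 𝓘(ℝ, H) 𝓘(ℝ, H) c m)) := rfl
        rw [he, ← h1]; exact hs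
      exact hco.of_comp
    · intro hs
      have hco : Surjective (⇑(mfderiv 𝓘(ℝ, H) 𝓘(ℝ, E) f m)
          ∘ ⇑(mfderiv 𝓘(ℝ, H) 𝓘(ℝ, H) c.symm (c m))) := by
        have he : ⇑(mfderiv 𝓘(ℝ, H) 𝓘(ℝ, E) f m) ∘ ⇑(mfderiv 𝓘(ℝ, H) 𝓘(ℝ, H) c.symm (c m))
            = ⇑((mfderiv 𝓘(ℝ, H) 𝓘(ℝ, E) f m).comp
                (mfderiv 𝓘(ℝ, H) 𝓘(ℝ, H) c.symm (c m))) := rfl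
        rw [he, ← h2, h3]; exact hs
      exact hco.of_comp
  have hφ : ContinuousOn (fun m => fderiv ℝ g (c m)) c.source :=
    hfd.comp c.continuousOn (fun m hm => c.map_source hm)
  have hO : IsOpen (c.source ∩ (fun m => fderiv ℝ g (c m)) ⁻¹'
      {T : H →L[ℝ] E | Surjective T}) :=
    hφ.isOpen_inter_preimage c.open_source CW_isOpen_setOf_surj_clm
  refine Filter.mem_of_superset (hO.mem_nhds ?_) ?_
  · exact ⟨mem_chart_source H m₀, (key m₀ (mem_chart_source H m₀)).1 hm₀⟩
  · rintro m ⟨hm, hsurj⟩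
    exact (key m hm).2 hsurj

end AuxLemmas

/-- `g*_{μ,s-reg}` is an open dense subset of `π⁻¹(U_{t*_+})`; consequently
`U_big = ν_big(g*_{μ,s-reg})` is open and dense in `ν_big(π⁻¹(U_{t*_+}))`
(density of `A` in `B` being expressed as `A ⊆ B ⊆ closure A`). -/
theorem muSreg_open_dense_in_sweep_preimage
    {G : Type*} [Group G] [TopologicalSpace G] [IsTopologicalGroup G]
    [CompactSpace G] [ConnectedSpace G]
    {E : Type*} [NormedAddCommGroup E] [NormedSpace ℝ E] [FiniteDimensional ℝ E]
    [MeasurableSpace E] [BorelSpace E]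
    {ℓ u : ℕ} {S : CoadjointSetting G E ℓ u}
    {M : Type*} [TopologicalSpace M] [ConnectedSpace M] [MeasurableSpace M]
    [BorelSpace M]
    {H : Type*} [NormedAddCommGroup H] [NormedSpace ℝ H]
    [ChartedSpace H M] [IsManifold 𝓘(ℝ, H) ((⊤ : ℕ∞) : WithTop ℕ∞) M]
    (D : StrongGCDatum S) (P : HamiltonianSpace S M H) (C : ChamberSetting S) :
    (IsOpen (P.muSreg D.toGCDatum) ∧
      P.muSreg D.toGCDatum ⊆ C.sweep ⁻¹' C.Ut P D.toGCDatum ∧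
      C.sweep ⁻¹' C.Ut P D.toGCDatum ⊆ closure (P.muSreg D.toGCDatum)) ∧
    (IsOpen (P.Ubig D.toGCDatum) ∧
      P.Ubig D.toGCDatum
        ⊆ D.toGCDatum.nuBig '' (C.sweep ⁻¹' C.Ut P D.toGCDatum) ∧
      D.toGCDatum.nuBig '' (C.sweep ⁻¹' C.Ut P D.toGCDatum)
        ⊆ closure (P.Ubig D.toGCDatum)) := by
  classical
  set A := P.muSreg D.toGCDatum with hA
  -- basic coadjoint action facts
  have coadj_mul : ∀ (g h : G) (ξ : E), S.coadj (g * h) ξ = S.coadj g (S.coadj h ξ) := by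
    intro g h ξ; rw [map_mul]; rfl
  have coadj_one : ∀ ξ : E, S.coadj 1 ξ = ξ := by
    intro ξ; rw [map_one]; rfl
  have coadj_inv : ∀ (g : G) (ξ : E), S.coadj g⁻¹ (S.coadj g ξ) = ξ := by
    intro g ξ; rw [← coadj_mul, inv_mul_cancel, coadj_one]
  have mem_orbit_self : ∀ ξ : E, ξ ∈ S.orbit ξ := fun ξ => ⟨1, coadj_one ξ⟩
  have orbit_eq_of_mem : ∀ ξ η : E, η ∈ S.orbit ξ → S.orbit η = S.orbit ξ := by
    rintro ξ η ⟨g, rfl⟩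
    ext ζ
    constructor
    · rintro ⟨h, rfl⟩
      exact ⟨h * g, coadj_mul h g ξ⟩
    · rintro ⟨h, rfl⟩
      refine ⟨h * g⁻¹, ?_⟩
      show S.coadj (h * g⁻¹) (S.coadj g ξ) = S.coadj h ξ
      rw [coadj_mul, coadj_inv]
  -- openness of g*_{μ,s-reg}
  have hR : IsOpen {m : M | Surjective (mfderiv 𝓘(ℝ, H) 𝓘(ℝ, E) P.mu m)} :=
    CW_isOpen_setOf_mfderiv_surjective P.smooth_mu
  have hAopen : IsOpen A := by
    have hAeq : A = D.toGCDatum.sreg ∩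
        (P.mu '' {m : M | Surjective (mfderiv 𝓘(ℝ, H) 𝓘(ℝ, E) P.mu m)}ᶜ)ᶜ := by
      ext ξ
      simp only [hA, HamiltonianSpace.muSreg, Set.mem_setOf_eq, Set.mem_inter_iff,
        Set.mem_compl_iff, Set.mem_image, not_exists, not_and]
      constructor
      · rintro ⟨h1, h2⟩
        exact ⟨h1, fun m hm hξ => hm (h2 m hξ)⟩
      · rintro ⟨h1, h2⟩
        exact ⟨h1, fun m hm => by_contra fun hns => h2 m hns hm⟩
    rw [hAeq]
    exact D.toGCDatum.sreg_open.inter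
      (P.proper_mu.isClosedMap _ hR.isClosed_compl).isOpen_compl
  -- transport of regular values along orbits
  have transport : ∀ ξ, ξ ∈ A → ∀ η ∈ S.orbit ξ, η ∈ D.toGCDatum.sreg → η ∈ A := by
    rintro ξ hξ η ⟨g, rfl⟩ hηs
    obtain ⟨hξs, hξr⟩ := hξ
    refine ⟨hηs, ?_⟩
    intro m hm
    set m' := P.act g⁻¹ m with hm'
    have hmm : P.act g m' = m := by
      rw [hm', map_inv]; exact Equiv.apply_symm_apply _ _
    have hμm' : P.mu m' = ξ := by
      rw [hm', P.equivariant, hm, coadj_inv]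
    have hsurj' : Surjective (mfderiv 𝓘(ℝ, H) 𝓘(ℝ, E) P.mu m') := hξr m' hμm'
    have hfun : P.mu ∘ ⇑(P.act g) = (fun ζ => S.coadj g ζ) ∘ P.mu :=
      funext fun x => P.equivariant g x
    have hμd : MDifferentiableAt 𝓘(ℝ, H) 𝓘(ℝ, E) P.mu m' :=
      (P.smooth_mu m').mdifferentiableAt (by simp)
    have hμdm : MDifferentiableAt 𝓘(ℝ, H) 𝓘(ℝ, E) P.mu m :=
      (P.smooth_mu m).mdifferentiableAt (by simp)
    have hactd : MDifferentiableAt 𝓘(ℝ, H) 𝓘(ℝ, H) (⇑(P.act g)) m' :=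
      ((P.act_smooth g) m').mdifferentiableAt (by simp)
    have hLd : MDifferentiableAt 𝓘(ℝ, E) 𝓘(ℝ, E) (fun ζ => S.coadj g ζ) (P.mu m') :=
      (((S.coadj g : E →L[ℝ] E)).differentiableAt).mdifferentiableAt
    have h1 : mfderiv 𝓘(ℝ, H) 𝓘(ℝ, E) (P.mu ∘ ⇑(P.act g)) m'
        = (mfderiv 𝓘(ℝ, H) 𝓘(ℝ, E) P.mu m).comp
            (mfderiv 𝓘(ℝ, H) 𝓘(ℝ, H) (⇑(P.act g)) m') := by
      rw [mfderiv_comp_of_eq (I' := 𝓘(ℝ, H)) (I'' := 𝓘(ℝ, E)) hμdm hactd hmm, hmm]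
    have h2 : mfderiv 𝓘(ℝ, H) 𝓘(ℝ, E) ((fun ζ => S.coadj g ζ) ∘ P.mu) m'
        = ((S.coadj g : E →L[ℝ] E)).comp (mfderiv 𝓘(ℝ, H) 𝓘(ℝ, E) P.mu m') := by
      rw [mfderiv_comp (I' := 𝓘(ℝ, E)) (I'' := 𝓘(ℝ, E)) m' hLd hμd]
      congr 1
      rw [show (fun ζ => S.coadj g ζ) = ⇑(S.coadj g : E →L[ℝ] E) from rfl]
      rw [mfderiv_eq_fderiv, ContinuousLinearMap.fderiv]
    have hRHS : Surjective
        (mfderiv 𝓘(ℝ, H) 𝓘(ℝ, E) ((fun ζ => S.coadj g ζ) ∘ P.mu) m') := by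
      rw [h2]
      exact (S.coadj g).surjective.comp hsurj'
    rw [← hfun, h1] at hRHS
    exact Function.Surjective.of_comp
      (f := ⇑(mfderiv 𝓘(ℝ, H) 𝓘(ℝ, E) P.mu m))
      (g := ⇑(mfderiv 𝓘(ℝ, H) 𝓘(ℝ, H) (⇑(P.act g)) m')) hRHS
  -- sweep facts
  have sweep_mem : ∀ ξ : E, C.sweep ξ ∈ S.orbit ξ := by
    intro ξ
    have h : C.sweep ξ ∈ S.orbit ξ ∩ C.chamber := by
      rw [C.sweep_spec ξ]; exact rfl
    exact h.1
  -- A ⊆ sweep ⁻¹' Ut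
  have hsub : A ⊆ C.sweep ⁻¹' C.Ut P D.toGCDatum := fun ξ hξ => ⟨ξ, hξ, rfl⟩
  -- density
  have hdense : C.sweep ⁻¹' C.Ut P D.toGCDatum ⊆ closure A := by
    intro η hη
    obtain ⟨ξ, hξA, hsw⟩ := hη
    have horb : S.orbit η = S.orbit ξ := by
      rw [← orbit_eq_of_mem η (C.sweep η) (sweep_mem η), ← hsw,
        orbit_eq_of_mem ξ (C.sweep ξ) (sweep_mem ξ)]
    have hηorb : η ∈ S.orbit ξ := horb ▸ mem_orbit_self η
    have hcl := D.orbit_sreg_dense ξ hξA.1 hηorb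
    refine closure_mono ?_ hcl
    rintro ζ ⟨hζo, hζs⟩
    exact transport ξ hξA ζ hζo hζs
  -- openness of Ubig
  have hnuBig_eq : D.toGCDatum.nuBig
      = fun ξ : E => ((D.toGCDatum.nuSmall ξ, D.toGCDatum.nuInt ξ) : RBig ℓ u) := rfl
  have hUbigOpen : IsOpen (P.Ubig D.toGCDatum) := by
    rw [isOpen_iff_mem_nhds]
    rintro x ⟨ξ, hξ, rfl⟩
    have hsreg : ξ ∈ D.toGCDatum.sreg := hξ.1
    have hsm : ContDiffAt ℝ (⊤ : ℕ∞)
        (fun ξ : E => ((D.toGCDatum.nuSmall ξ, D.toGCDatum.nuInt ξ) : RBig ℓ u)) ξ :=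
      D.toGCDatum.smooth_sreg.contDiffAt (D.toGCDatum.sreg_open.mem_nhds hsreg)
    have hstrict := hsm.hasStrictFDerivAt (by simp)
    have hsurj := D.toGCDatum.submersion ξ hsreg
    have hmap := hstrict.map_nhds_eq_of_surj (LinearMap.range_eq_top.mpr hsurj)
    have hAnhds : A ∈ nhds ξ := hAopen.mem_nhds hξ
    have himg : (fun ξ : E => ((D.toGCDatum.nuSmall ξ, D.toGCDatum.nuInt ξ) : RBig ℓ u)) '' A
        ∈ Filter.map (fun ξ : E => ((D.toGCDatum.nuSmall ξ, D.toGCDatum.nuInt ξ) : RBig ℓ u))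
          (nhds ξ) := Filter.image_mem_map hAnhds
    rw [hmap] at himg
    exact himg
  refine ⟨⟨hAopen, hsub, hdense⟩, hUbigOpen, ?_, ?_⟩
  · exact Set.image_mono hsub
  · rintro x ⟨η, hη, rfl⟩
    have hcont : Continuous D.toGCDatum.nuBig := D.toGCDatum.continuous_nuBig
    exact image_closure_subset_closure_image hcont ⟨η, hdense hη, rfl⟩
end
end
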